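/- The matrix g = [[1,1],[1,2]] belongs to Γ₃, the subgroup of SL(2,ℝ) generated by S = [[0,1],[−1,0]] and T₃ = [[1,1],[0,1]] (indeed Γ₃ = SL(2,ℤ)). However, for every integer q ≥ 4, neither g nor −g belongs to the Hecke triangle group Γ_q, the subgroup of SL(2,ℝ) generated by S and T_q = [[1, 2cos(π/q)],[0,1]]. Consequently, the indefinite binary quadratic form [1,1,−1] is associated to the modular group but not to any Hecke triangle group Γ_q with q > 3. -/

import Mathlib

noncomputable section

abbrev SL2 := Matrix.SpecialLinearGroup (Fin 2) ℝ

/-- `S = [[0,1],[−1,0]] ∈ SL(2,ℝ)`. -/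
def Smat : SL2 := ⟨!![0, 1; -1, 0], by norm_num [Matrix.det_fin_two_of]⟩

/-- `T_q = [[1, λ_q],[0,1]] ∈ SL(2,ℝ)` where `λ_q = 2cos(π/q)`. -/
def Tmat (q : ℕ) : SL2 :=
  ⟨!![1, 2 * Real.cos (Real.pi / q); 0, 1], by norm_num [Matrix.det_fin_two_of]⟩

/-- The Hecke triangle group `Γ_q ≤ SL(2,ℝ)`, generated by `S` and `T_q`. -/
def Hecke (q : ℕ) : Subgroup SL2 := Subgroup.closure {Smat, Tmat q}

/-- The matrix `[[1,1],[1,2]] ∈ SL(2,ℝ)`, associated to the form `[1,1,−1]`. -/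
def gEx : SL2 := ⟨!![1, 1; 1, 2], by norm_num [Matrix.det_fin_two_of]⟩

/-!
Reduce modulo 2. Over a ring in which `2 = 0` the generators `S` and `T x` are involutions, so
`⟨S, T x⟩` consists of alternating words in them, and each such word `M` satisfies
`M₀₁ = M₁₀, M₀₀ + M₁₁ = x M₀₁` or `M₀₀ = M₁₁, M₀₁ + M₁₀ = x M₀₀`; for `[[1,1],[1,2]]` this
forces `x = 1`.

For `λ = 2 cos (π / q)` reduce along `ℤ[X] → 𝔽₂[X] / (m̄)`, with `m̄` the minimal polynomial of
`λ` over `ℤ` taken mod 2. The group `⟨S, T λ⟩` is the image of `⟨S, T X⟩ ≤ SL(2, ℤ[X])`, and a lift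
of an integer matrix reduces to its parities because the kernel of evaluation at `λ` is
generated by the minimal polynomial. When `q ≥ 4`, `1 < λ < 2` is not an integer, so `m̄` has
degree at least 2 and `X ≠ 1` in the quotient. Finally `-1 = S²`, and `g = S T⁻¹ S⁻¹ T` in `Γ₃`.
-/

open Matrix Polynomial

theorem Matrix.map_fin_two_of {α β : Type*} (f : α → β) (a b c d : α) :
    (!![a, b; c, d] : Matrix (Fin 2) (Fin 2) α).map f = !![f a, f b; f c, f d] := by
  ext i j; fin_cases i <;> fin_cases j <;> rfl

theorem AdjoinRoot.root_ne_one {F : Type*} [Field F] {f : F[X]} (hf : 2 ≤ f.natDegree) :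
    AdjoinRoot.root f ≠ 1 := by
  intro h
  have hdvd : f ∣ X - C 1 := by
    rw [← AdjoinRoot.mk_eq_zero, map_sub, AdjoinRoot.mk_X, AdjoinRoot.mk_C, h, map_one, sub_self]
  have := natDegree_le_of_dvd hdvd (X_sub_C_ne_zero 1)
  rw [natDegree_X_sub_C] at this
  omega

namespace HeckeGroup

variable {R B : Type*} [CommRing R] [CommRing B]

def S (R : Type*) [CommRing R] : SpecialLinearGroup (Fin 2) R :=
  ⟨!![0, 1; -1, 0], by simp [det_fin_two_of]⟩

def T (x : R) : SpecialLinearGroup (Fin 2) R := ⟨!![1, x; 0, 1], by simp [det_fin_two_of]⟩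

@[simp] theorem coe_S : (S R : Matrix (Fin 2) (Fin 2) R) = !![0, 1; -1, 0] := rfl

@[simp] theorem coe_T (x : R) : (T x : Matrix (Fin 2) (Fin 2) R) = !![1, x; 0, 1] := rfl

def group (x : R) : Subgroup (SpecialLinearGroup (Fin 2) R) := Subgroup.closure {S R, T x}

theorem S_mem_group (x : R) : S R ∈ group x := Subgroup.subset_closure (by simp)

theorem T_mem_group (x : R) : T x ∈ group x := Subgroup.subset_closure (by simp)

theorem map_S (f : R →+* B) : SpecialLinearGroup.map f (S R) = S B := by
  ext i j
  rw [SpecialLinearGroup.map_apply_coe]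
  fin_cases i <;> fin_cases j <;> simp

theorem map_T (f : R →+* B) (x : R) : SpecialLinearGroup.map f (T x) = T (f x) := by
  ext i j
  rw [SpecialLinearGroup.map_apply_coe]
  fin_cases i <;> fin_cases j <;> simp

theorem map_group (f : R →+* B) (x : R) :
    (group x).map (SpecialLinearGroup.map f) = group (f x) := by
  rw [group, MonoidHom.map_closure, Set.image_pair, map_S, map_T, group]

theorem S_sq : S R ^ 2 = -1 := by
  ext i j
  fin_cases i <;> fin_cases j <;> simp [sq, mul_apply, Fin.sum_univ_two]

theorem neg_mem_group_iff {x : R} {g : SpecialLinearGroup (Fin 2) R} :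
    -g ∈ group x ↔ g ∈ group x := by
  have h : (-1 : SpecialLinearGroup (Fin 2) R) ∈ group x := S_sq (R := R) ▸ pow_mem (S_mem_group x) 2
  constructor <;> intro hg <;> simpa using mul_mem h hg

/-- Modulo 2, words of even length in `S` and `T x` satisfy the first clause and words of odd
length the second. -/
def IsWordShape (x : R) (M : Matrix (Fin 2) (Fin 2) R) : Prop :=
  (M 0 1 = M 1 0 ∧ M 0 0 + M 1 1 = x * M 0 1) ∨ (M 0 0 = M 1 1 ∧ M 0 1 + M 1 0 = x * M 0 0)

section CharTwo

variable (h2 : (2 : R) = 0)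
include h2

theorem S_inv_of_two_eq_zero : (S R)⁻¹ = S R := by
  have h : (-1 : R) = 1 := by linear_combination -h2
  ext i j; fin_cases i <;> fin_cases j <;> simp [adjugate_fin_two, h]

theorem T_inv_of_two_eq_zero (x : R) : (T x)⁻¹ = T x := by
  have h : -x = x := by linear_combination -x * h2
  ext i j; fin_cases i <;> fin_cases j <;> simp [adjugate_fin_two, h]

theorem isWordShape_one (x : R) : IsWordShape x 1 :=
  Or.inl ⟨by simp, by simpa [one_add_one_eq_two] using h2⟩

theorem IsWordShape.S_mul {x : R} {M : Matrix (Fin 2) (Fin 2) R} (hM : IsWordShape x M) :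
    IsWordShape x ((S R : Matrix (Fin 2) (Fin 2) R) * M) := by
  simp [IsWordShape, mul_apply, Fin.sum_univ_two] at hM ⊢
  rcases hM with hM | hM
  · right; grind
  · left; grind

theorem IsWordShape.T_mul {x : R} {M : Matrix (Fin 2) (Fin 2) R} (hM : IsWordShape x M) :
    IsWordShape x ((T x : Matrix (Fin 2) (Fin 2) R) * M) := by
  simp [IsWordShape, mul_apply, Fin.sum_univ_two] at hM ⊢
  rcases hM with hM | hM
  · right; grind
  · left; grind

theorem isWordShape_of_mem {x : R} {g : SpecialLinearGroup (Fin 2) R} (hg : g ∈ group x) :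
    IsWordShape x g := by
  induction hg using Subgroup.closure_induction_left with
  | one => exact isWordShape_one h2 x
  | mul_left a ha g _ ih =>
    rcases ha with rfl | rfl
    · exact ih.S_mul h2
    · exact ih.T_mul h2
  | inv_mul_cancel a ha g _ ih =>
    rcases ha with rfl | rfl
    · rw [S_inv_of_two_eq_zero h2]; exact ih.S_mul h2
    · rw [T_inv_of_two_eq_zero h2]; exact ih.T_mul h2

theorem eq_one_of_isWordShape {x : R} (h : IsWordShape x !![1, 1; 1, 2]) : x = 1 := by
  simp [IsWordShape] at h
  grind

end CharTwo

variable {K : Type*} [Field K] [CharZero K]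

theorem eq_of_aeval_eq {α : K} (hα : IsIntegral ℤ α) (π : ℤ[X] →+* B)
    (hπ : π (minpoly ℤ α) = 0) {p q : ℤ[X]} (h : aeval α p = aeval α q) : π p = π q := by
  obtain ⟨r, hr⟩ := minpoly.isIntegrallyClosed_dvd hα (p := p - q) (by simp [h])
  rw [← sub_eq_zero, ← map_sub, hr, map_mul, hπ, zero_mul]

theorem isWordShape_of_mem_of_eq_intCast {α : K} (hα : IsIntegral ℤ α) (π : ℤ[X] →+* B)
    (hπ : π (minpoly ℤ α) = 0) (h2 : (2 : B) = 0) {g : SpecialLinearGroup (Fin 2) K}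
    (hg : g ∈ group α) {N : Matrix (Fin 2) (Fin 2) ℤ}
    (hN : (g : Matrix (Fin 2) (Fin 2) K) = N.map (↑)) :
    IsWordShape (π X) (N.map (↑)) := by
  rw [← aeval_X (R := ℤ) α, ← AlgHom.coe_toRingHom, ← map_group] at hg
  obtain ⟨M, hM, rfl⟩ := hg
  convert isWordShape_of_mem h2 (map_group π X ▸ Subgroup.mem_map_of_mem _ hM) using 1
  ext i j
  have hij := congr_fun₂ hN i j
  rw [SpecialLinearGroup.map_apply_coe] at hij ⊢
  simp only [RingHom.mapMatrix_apply, map_apply, AlgHom.coe_toRingHom] at hij ⊢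
  rw [← map_intCast π]
  exact eq_of_aeval_eq hα π hπ (by rw [map_intCast, hij])

theorem notMem_group {α : K} (hα : IsIntegral ℤ α) (hdeg : 2 ≤ (minpoly ℤ α).natDegree)
    {g : SpecialLinearGroup (Fin 2) K} (hg : (g : Matrix (Fin 2) (Fin 2) K) = !![1, 1; 1, 2]) :
    g ∉ group α := by
  intro hmem
  set f := (minpoly ℤ α).map (Int.castRingHom (ZMod 2))
  let π := (AdjoinRoot.mk f).comp (mapRingHom (Int.castRingHom (ZMod 2)))
  have h2 : (2 : AdjoinRoot f) = 0 := by
    rw [← map_ofNat (AdjoinRoot.of f) 2, show (2 : ZMod 2) = 0 from rfl, map_zero]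
  have hshape := isWordShape_of_mem_of_eq_intCast hα π AdjoinRoot.mk_self h2 hmem
    (N := !![1, 1; 1, 2]) (by simp [hg, map_fin_two_of])
  refine AdjoinRoot.root_ne_one (f := f) ?_
    (eq_one_of_isWordShape h2 (by simpa [map_fin_two_of, π] using hshape))
  rwa [(minpoly.monic hα).natDegree_map]

end HeckeGroup

open Real

theorem hecke_eq_group (q : ℕ) : Hecke q = HeckeGroup.group (2 * cos (π / q)) := rfl

theorem isIntegral_two_mul_cos_pi_div (q : ℕ) : IsIntegral ℤ (2 * cos (π / q)) := by
  simpa [div_eq_inv_mul] using isIntegral_two_mul_cos_rat_mul_pi (q : ℚ)⁻¹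

theorem two_le_natDegree_minpoly_two_mul_cos_pi_div {q : ℕ} (hq : 4 ≤ q) :
    2 ≤ (minpoly ℤ (2 * cos (π / q))).natDegree := by
  rw [minpoly.two_le_natDegree_iff (isIntegral_two_mul_cos_pi_div q)]
  rintro ⟨n, hn⟩
  simp only [eq_intCast] at hn
  have hq' : (4 : ℝ) ≤ q := by exact_mod_cast hq
  have hpos : 0 < π / q := by positivity
  have hlt : π / q < π / 3 := div_lt_div_of_pos_left pi_pos (by norm_num) (by linarith)
  have h1 : (1 : ℝ) < n := by
    have := cos_lt_cos_of_nonneg_of_le_pi hpos.le (by linarith [pi_pos]) hlt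
    rw [cos_pi_div_three] at this
    linarith
  have h2 : (n : ℝ) < 2 := by
    have := cos_lt_cos_of_nonneg_of_le_pi le_rfl (by linarith [pi_pos]) hpos
    rw [cos_zero] at this
    linarith
  norm_cast at h1 h2
  omega

open HeckeGroup in
theorem gEx_mem_group_one : gEx ∈ group (1 : ℝ) := by
  have h : gEx = S ℝ * (T 1)⁻¹ * (S ℝ)⁻¹ * T 1 := by
    ext i j
    fin_cases i <;> fin_cases j <;>
      norm_num [gEx, adjugate_fin_two, mul_apply, Fin.sum_univ_two]
  rw [h]
  exact mul_mem (mul_mem (mul_mem (S_mem_group 1) (inv_mem (T_mem_group 1)))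
    (inv_mem (S_mem_group 1))) (T_mem_group 1)

/-- `[[1,1],[1,2]]` belongs to `Γ₃` (the modular group), but for every
`q ≥ 4` neither it nor its negative belongs to `Γ_q`; consequently the indefinite form
`[1,1,−1]` is associated to the modular group but to no Hecke triangle group with
`q > 3`. -/
theorem stmt_19 :
    gEx ∈ Hecke 3 ∧ ∀ q : ℕ, 4 ≤ q → gEx ∉ Hecke q ∧ -gEx ∉ Hecke q := by
  refine ⟨?_, fun q hq => ?_⟩
  · have h : 2 * cos (π / (3 : ℕ)) = 1 := by norm_num [cos_pi_div_three]
    rw [hecke_eq_group, h]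
    exact gEx_mem_group_one
  · have hg : gEx ∉ Hecke q := HeckeGroup.notMem_group (isIntegral_two_mul_cos_pi_div q)
      (two_le_natDegree_minpoly_two_mul_cos_pi_div hq) rfl
    exact ⟨hg, by rwa [hecke_eq_group, HeckeGroup.neg_mem_group_iff]⟩
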